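/- Let 0 < α < 1/2 and let σ > 0 satisfy σ² ≥ α(1 − α). Define h(s) = ln(α e^{s(1−α)} + (1−α) e^{−sα}) − σ²s²/2. Then the derivative h′(s) > 0 for every s < 0; in particular, h has no local maximum on (−∞, 0). -/

import Mathlib

open Real

/-!
Factoring `e^{-sα}` out of the logarithm, `h(s) = log (α eˢ + 1 - α) - α s - σ² s² / 2`, so
`h'(s) = α(1-α)(eˢ - 1)/(α eˢ + 1 - α) - σ² s`. For `s < 0` and `σ² ≥ α(1-α)` positivity of `h'`
reduces to `s (α eˢ + 1 - α) < eˢ - 1`. This is linear in `α` with negative slope `-s(eˢ - 1)`,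
so for `α < 1/2` it follows from the case `α = 1/2`, i.e. `2 + s ≤ (2 - s) eˢ`, which holds
because the difference of the two sides is antitone (its derivative is `(1 - s) eˢ - 1 ≤ 0`).
-/

/-- `h(s) = ln (α e^{s(1-α)} + (1-α) e^{-sα}) - σ² s² / 2`. -/
noncomputable def hFun (α σ : ℝ) (s : ℝ) : ℝ :=
  Real.log (α * Real.exp (s * (1 - α)) + (1 - α) * Real.exp (-s * α)) - σ ^ 2 * s ^ 2 / 2

theorem two_add_le_two_sub_mul_exp {x : ℝ} (hx : x ≤ 0) : 2 + x ≤ (2 - x) * exp x := by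
  let f : ℝ → ℝ := fun y => (2 - y) * exp y - 2 - y
  have hf : ∀ y, HasDerivAt f ((1 - y) * exp y - 1) y := fun y => by
    refine ((((hasDerivAt_id y).const_sub 2).mul (hasDerivAt_exp y)).sub_const 2).sub
      (hasDerivAt_id y) |>.congr_deriv ?_
    simp only [id]
    ring
  have hf_anti : Antitone f := antitone_of_deriv_nonpos (fun y => (hf y).differentiableAt)
    fun y => by
      rw [(hf y).deriv, sub_nonpos]
      calc (1 - y) * exp y ≤ exp (-y) * exp y := by
            gcongr; linarith [add_one_le_exp (-y)]
        _ = 1 := by rw [← exp_add, neg_add_cancel, exp_zero]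
  have := hf_anti hx
  simp only [f, sub_zero, exp_zero, mul_one] at this
  linarith

theorem mul_add_lt_exp_sub_one {α x : ℝ} (hα : α < 1 / 2) (hx : x < 0) :
    x * (α * exp x + (1 - α)) < exp x - 1 := by
  have h_half := two_add_le_two_sub_mul_exp hx.le
  have h_slope : 0 < x * (exp x - 1) := mul_pos_of_neg_of_neg hx (by simp [hx])
  nlinarith

theorem mul_exp_add_one_sub_pos {α : ℝ} (hα₀ : 0 ≤ α) (hα₁ : α ≤ 1) (s : ℝ) :
    0 < α * exp s + (1 - α) := by
  nlinarith [exp_pos s, mul_nonneg hα₀ (exp_pos s).le, mul_nonneg (sub_nonneg.2 hα₁) (exp_pos s).le]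

theorem hFun_eq {α : ℝ} (hα₀ : 0 ≤ α) (hα₁ : α ≤ 1) (σ : ℝ) :
    hFun α σ = fun s => log (α * exp s + (1 - α)) - α * s - σ ^ 2 * s ^ 2 / 2 := by
  funext s
  have hD := mul_exp_add_one_sub_pos hα₀ hα₁ s
  have h_factor : α * exp (s * (1 - α)) + (1 - α) * exp (-s * α)
      = exp (-s * α) * (α * exp s + (1 - α)) := by
    rw [mul_add, ← mul_assoc, mul_comm (exp _) α, mul_assoc, ← exp_add]
    ring_nf
  rw [hFun, h_factor, log_mul (exp_pos _).ne' hD.ne', log_exp]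
  ring

theorem hasDerivAt_hFun {α : ℝ} (hα₀ : 0 ≤ α) (hα₁ : α ≤ 1) (σ s : ℝ) :
    HasDerivAt (hFun α σ)
      (α * (1 - α) * (exp s - 1) / (α * exp s + (1 - α)) - σ ^ 2 * s) s := by
  have hD := mul_exp_add_one_sub_pos hα₀ hα₁ s
  rw [hFun_eq hα₀ hα₁]
  have h := ((((hasDerivAt_exp s).const_mul α).add_const (1 - α)).log hD.ne').sub
    ((hasDerivAt_id s).const_mul α) |>.sub (((hasDerivAt_pow 2 s).const_mul (σ ^ 2)).div_const 2)
  refine h.congr_deriv ?_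
  field_simp
  ring

theorem hFun_deriv_pos_of_neg_general (α σ : ℝ) (hα₀ : 0 < α) (hα : α < 1 / 2)
    (hσ2 : α * (1 - α) ≤ σ ^ 2) :
    (∀ s : ℝ, s < 0 → 0 < deriv (hFun α σ) s) ∧
    (∀ s : ℝ, s < 0 → ¬ IsLocalMax (hFun α σ) s) := by
  have hderiv_pos : ∀ s : ℝ, s < 0 → 0 < deriv (hFun α σ) s := by
    intro s hs
    have hα₁ : α ≤ 1 := by linarith
    have hD := mul_exp_add_one_sub_pos hα₀.le hα₁ s
    rw [(hasDerivAt_hFun hα₀.le hα₁ σ s).deriv, sub_pos]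
    calc σ ^ 2 * s ≤ α * (1 - α) * s := mul_le_mul_of_nonpos_right hσ2 hs.le
      _ < α * (1 - α) * (exp s - 1) / (α * exp s + (1 - α)) := by
        rw [lt_div_iff₀ hD, mul_assoc]
        exact mul_lt_mul_of_pos_left (mul_add_lt_exp_sub_one hα hs) (mul_pos hα₀ (by linarith))
  exact ⟨hderiv_pos, fun s hs hmax => (hderiv_pos s hs).ne' hmax.deriv_eq_zero⟩

/-- For `0 < α < 1/2` and `σ² ≥ α(1-α)`, the derivative of `h` is positive on `(-∞, 0)`;
in particular `h` has no local maximum there. -/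
theorem hFun_deriv_pos_of_neg (α σ : ℝ) (hα₀ : 0 < α) (hα : α < 1 / 2)
    (hσ : 0 < σ) (hσ2 : α * (1 - α) ≤ σ ^ 2) :
    (∀ s : ℝ, s < 0 → 0 < deriv (hFun α σ) s) ∧
    (∀ s : ℝ, s < 0 → ¬ IsLocalMax (hFun α σ) s) :=
  hFun_deriv_pos_of_neg_general α σ hα₀ hα hσ2
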